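/- Trickle-Down Theorem: let S be a face with |S| = i < r − 2 in a pure weighted simplicial complex of dimension r, and suppose the local walk Q_S is irreducible with spectral gap γ_i > 0. If every one-element extension Z = S ∪ {a} satisfies γ(Q_Z) ≥ γ_{i+1} > 0, then γ_i ≥ 2 − 1/γ_{i+1}. -/

import Mathlib

open Finset
open scoped Classical

variable {E : Type*} [Fintype E] [DecidableEq E]

/-- `μ` is a probability distribution on the size-`n` faces (top level) of a pure
weighted simplicial complex with ground set `E`. -/
def IsDistOn (μ : Finset E → ℝ) (n : ℕ) : Prop :=
  (∀ S, 0 ≤ μ S) ∧ (∀ S, S.card ≠ n → μ S = 0) ∧ (∑ S, μ S = 1)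

/-- The induced distribution `π_k` on level `k`:
`π_k(S) = C(n,k)⁻¹ · Σ_{T ⊇ S} μ(T)` for `|S| = k`, and `0` otherwise. -/
noncomputable def piLev (μ : Finset E → ℝ) (n k : ℕ) (S : Finset E) : ℝ :=
  if S.card = k then (n.choose k : ℝ)⁻¹ * ∑ T ∈ univ.filter (fun T => S ⊆ T), μ T else 0

/-- The stationary distribution `π_{S,1}` of the local walk at the face `S`:
the one-element conditional distribution above `S`. -/
noncomputable def piLoc (μ : Finset E → ℝ) (n : ℕ) (S : Finset E) (a : E) : ℝ :=
  piLev μ n (S.card + 1) (insert a S) / ((S.card + 1) * piLev μ n S.card S)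

/-- The local walk `Q_S` at a face `S`:
`Q_S(a,b) = π_{i+2}(S∪a∪b) / ((i+2)·π_{i+1}(S∪a))` (0 when `a = b`). -/
noncomputable def localQ (μ : Finset E → ℝ) (n : ℕ) (S : Finset E) : Matrix E E ℝ :=
  Matrix.of fun a b =>
    piLev μ n (S.card + 2) (insert b (insert a S)) /
      ((S.card + 2) * piLev μ n (S.card + 1) (insert a S))

/-- The down operator `P↓_k` from level `k` to level `k−1`. -/
noncomputable def Pdown (k : ℕ) : Matrix (Finset E) (Finset E) ℝ :=
  Matrix.of fun S T => if T ⊆ S ∧ S.card = k ∧ T.card = k - 1 then (k : ℝ)⁻¹ else 0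

/-- The up operator `P↑_k` from level `k` to level `k+1`. -/
noncomputable def Pup (μ : Finset E → ℝ) (n k : ℕ) : Matrix (Finset E) (Finset E) ℝ :=
  Matrix.of fun S T => if S ⊆ T ∧ S.card = k ∧ T.card = k + 1 then
    piLev μ n (k + 1) T / (((k : ℝ) + 1) * piLev μ n k S) else 0

/-- The multi-level down operator from level `i` to level `j ≤ i`
(remove `i−j` uniformly random elements). -/
noncomputable def PdownM (i j : ℕ) : Matrix (Finset E) (Finset E) ℝ :=
  Matrix.of fun S T => if T ⊆ S ∧ S.card = i ∧ T.card = j then (i.choose j : ℝ)⁻¹ else 0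

/-- The multi-level up operator from level `j` to level `i ≥ j`
(add `i−j` elements according to the conditional distribution). -/
noncomputable def PupM (μ : Finset E → ℝ) (n j i : ℕ) : Matrix (Finset E) (Finset E) ℝ :=
  Matrix.of fun S T => if S ⊆ T ∧ S.card = j ∧ T.card = i then
    piLev μ n i T / ((i.choose j : ℝ) * piLev μ n j S) else 0

/-- Dirichlet form `E_P(f) = (1/2)·Σ_{a,b} π(a)P(a,b)(f(a)−f(b))²`. -/
noncomputable def dirichletForm {ι : Type*} [Fintype ι] (π : ι → ℝ)
    (P : Matrix ι ι ℝ) (f : ι → ℝ) : ℝ :=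
  (1 / 2) * ∑ a, ∑ b, π a * P a b * (f a - f b) ^ 2

/-- Variance `Var_π(f)` with respect to a weight `π` summing to 1. -/
noncomputable def varw {ι : Type*} [Fintype ι] (π : ι → ℝ) (f : ι → ℝ) : ℝ :=
  ∑ a, π a * (f a - ∑ b, π b * f b) ^ 2

lemma core_op {H : Type*} [NormedAddCommGroup H] [InnerProductSpace ℝ H]
    [FiniteDimensional ℝ H] (T : H →ₗ[ℝ] H) (hT : T.IsSymmetric) (β : ℝ)
    (hlow : ∀ x : H, -(inner ℝ x x : ℝ) ≤ inner ℝ x (T x))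
    (hup : ∀ x : H, (inner ℝ x (T x) : ℝ) ≤ β * inner ℝ x x) (x : H) :
    (inner ℝ (T x) (T x) : ℝ) ≤ β * inner ℝ x x + (β - 1) * inner ℝ x (T x) := by
  classical
  have hn : Module.finrank ℝ H = Module.finrank ℝ H := rfl
  set n := Module.finrank ℝ H with hndef
  let b := hT.eigenvectorBasis hn
  let μ : Fin n → ℝ := hT.eigenvalues hn
  have hrepr : ∀ (v : H) (i : Fin n), b.repr (T v) i = μ i * b.repr v i := fun v i =>
    hT.eigenvectorBasis_apply_self_apply hn v i
  have h1 : ∀ i, (inner ℝ (b i) (b i) : ℝ) = 1 := by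
    intro i
    rw [real_inner_self_eq_norm_mul_norm, b.orthonormal.1 i]; norm_num
  have h2 : ∀ i, (inner ℝ (b i) (T (b i)) : ℝ) = μ i := by
    intro i
    have h := hT.apply_eigenvectorBasis hn i
    have : T (b i) = μ i • b i := h
    rw [this, real_inner_smul_right, h1]; ring
  have hμlow : ∀ i, -1 ≤ μ i := by
    intro i; have := hlow (b i); rw [h1, h2] at this; linarith
  have hμup : ∀ i, μ i ≤ β := by
    intro i; have := hup (b i); rw [h1, h2] at this; linarith
  have key : ∀ (v w : H), (inner ℝ v w : ℝ) = ∑ i, b.repr v i * b.repr w i := by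
    intro v w
    have h := b.repr.inner_map_map v w
    rw [← h, PiLp.inner_apply]
    simp [RCLike.inner_apply, starRingEnd_apply, mul_comm]
  have hTx : ∀ i, b.repr (T x) i = μ i * b.repr x i := hrepr x
  rw [key, key, key]
  simp only [hTx]
  rw [Finset.mul_sum, Finset.mul_sum, ← Finset.sum_add_distrib]
  apply Finset.sum_le_sum
  intro i _
  have h := mul_nonneg (mul_nonneg (sub_nonneg.2 (hμup i))
    (by linarith [hμlow i] : (0:ℝ) ≤ 1 + μ i)) (mul_self_nonneg (b.repr x i))
  nlinarith [h]

lemma piLev_nonneg {μ : Finset E → ℝ} (hμ : ∀ T, 0 ≤ μ T) (r k : ℕ) (W : Finset E) :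
    0 ≤ piLev μ r k W := by
  unfold piLev
  split
  · exact mul_nonneg (by positivity) (Finset.sum_nonneg fun T _ => hμ T)
  · exact le_refl 0

lemma piLev_of_card_ne {μ : Finset E → ℝ} {r k : ℕ} {W : Finset E} (h : W.card ≠ k) :
    piLev μ r k W = 0 := if_neg h

lemma sum_piLev_insert {μ : Finset E → ℝ} {r : ℕ} (hμ : IsDistOn μ r) {k : ℕ} (hk : k < r)
    {W : Finset E} (hW : W.card = k) :
    ∑ a, piLev μ r (k + 1) (insert a W) = (k + 1) * piLev μ r k W := by
  have step : ∀ a, piLev μ r (k + 1) (insert a W) =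
      (r.choose (k + 1) : ℝ)⁻¹ * ∑ T, (if W ⊆ T ∧ a ∈ T \ W then μ T else 0) := by
    intro a
    by_cases ha : a ∈ W
    · rw [Finset.insert_eq_self.2 ha, piLev_of_card_ne (by omega)]
      have h0 : ∀ T : Finset E, (if W ⊆ T ∧ a ∈ T \ W then μ T else 0) = 0 := by
        intro T
        rw [if_neg]
        rintro ⟨-, hmem⟩
        exact (Finset.mem_sdiff.1 hmem).2 ha
      simp only [h0, Finset.sum_const_zero, mul_zero]
    · rw [piLev, if_pos (by rw [Finset.card_insert_of_notMem ha, hW])]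
      congr 1
      rw [Finset.sum_filter]
      apply Finset.sum_congr rfl
      intro T _
      congr 1
      simp only [Finset.insert_subset_iff, Finset.mem_sdiff, eq_iff_iff]
      tauto
  simp_rw [step]
  rw [← Finset.mul_sum, Finset.sum_comm]
  have inner : ∀ T : Finset E, (∑ a, if W ⊆ T ∧ a ∈ T \ W then μ T else 0) =
      if W ⊆ T then ((r : ℝ) - k) * μ T else 0 := by
    intro T
    by_cases hWT : W ⊆ T
    · simp only [hWT, true_and, if_pos]
      rw [Finset.sum_ite_mem, Finset.univ_inter, Finset.sum_const, nsmul_eq_mul]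
      by_cases hT : μ T = 0
      · rw [hT]; ring
      · have hcard : T.card = r := by
          by_contra hc; exact hT (hμ.2.1 T hc)
        rw [Finset.card_sdiff_of_subset hWT, hW, hcard, Nat.cast_sub hk.le]
    · simp [hWT]
  simp_rw [inner]
  have hCk : (r.choose k : ℝ) ≠ 0 := Nat.cast_ne_zero.2 (Nat.choose_pos hk.le).ne'
  have hCk1 : (r.choose (k+1) : ℝ) ≠ 0 := Nat.cast_ne_zero.2 (Nat.choose_pos hk).ne'
  have hid : (r.choose (k+1) : ℝ) * ((k:ℝ)+1) = (r.choose k : ℝ) * ((r:ℝ) - k) := by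
    have h2 := congrArg (fun x : ℕ => (x : ℝ)) (Nat.choose_succ_right_eq r k)
    push_cast [Nat.cast_sub hk.le] at h2
    linarith
  have hfac : ∀ T : Finset E, (if W ⊆ T then ((r:ℝ) - k) * μ T else 0) =
      ((r:ℝ) - k) * (if W ⊆ T then μ T else 0) := by
    intro T; split <;> ring
  simp_rw [hfac]
  rw [← Finset.mul_sum, piLev, if_pos hW, Finset.sum_filter, ← mul_assoc, ← mul_assoc]
  congr 1
  field_simp
  linear_combination (-1 : ℝ) * hid

lemma piLev_superset_zero {μ : Finset E → ℝ} {r : ℕ} (hμ : ∀ T, 0 ≤ μ T) {k : ℕ} (hk : k ≤ r)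
    {W : Finset E} (hW : W.card = k) (h0 : piLev μ r k W = 0) {m : ℕ} {V : Finset E}
    (hWV : W ⊆ V) : piLev μ r m V = 0 := by
  rw [piLev, if_pos hW] at h0
  have hC : ((r.choose k : ℝ))⁻¹ ≠ 0 :=
    inv_ne_zero (Nat.cast_ne_zero.2 (Nat.choose_pos hk).ne')
  have hs : ∑ T ∈ univ.filter (fun T => W ⊆ T), μ T = 0 := by
    rcases mul_eq_zero.1 h0 with h | h
    · exact absurd h hC
    · exact h
  have hz : ∀ T ∈ univ.filter (fun T => W ⊆ T), μ T = 0 :=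
    (Finset.sum_eq_zero_iff_of_nonneg (fun T _ => hμ T)).1 hs
  rw [piLev]
  split
  · rw [Finset.sum_eq_zero, mul_zero]
    intro T hT
    simp only [Finset.mem_filter, Finset.mem_univ, true_and] at hT
    apply hz T
    simp only [Finset.mem_filter, Finset.mem_univ, true_and]
    exact hWV.trans hT
  · rfl

noncomputable def locB2 (μ : Finset E → ℝ) (r : ℕ) (S : Finset E) (a b : E) : ℝ :=
  piLev μ r (S.card + 2) (insert b (insert a S)) /
    (((S.card : ℝ) + 1) * ((S.card : ℝ) + 2) * piLev μ r S.card S)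

noncomputable def locB3 (μ : Finset E → ℝ) (r : ℕ) (S : Finset E) (a b c : E) : ℝ :=
  piLev μ r (S.card + 3) (insert c (insert b (insert a S))) /
    (((S.card : ℝ) + 1) * ((S.card : ℝ) + 2) * ((S.card : ℝ) + 3) * piLev μ r S.card S)

section Loc

variable {μ : Finset E → ℝ} {r : ℕ} {S : Finset E}

lemma piLoc_nonneg (hμ : ∀ T, 0 ≤ μ T) (a : E) : 0 ≤ piLoc μ r S a :=
  div_nonneg (piLev_nonneg hμ _ _ _) (mul_nonneg (by positivity) (piLev_nonneg hμ _ _ _))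

lemma localQ_nonneg (hμ : ∀ T, 0 ≤ μ T) (a b : E) : 0 ≤ localQ μ r S a b :=
  div_nonneg (piLev_nonneg hμ _ _ _) (mul_nonneg (by positivity) (piLev_nonneg hμ _ _ _))

lemma locB2_nonneg (hμ : ∀ T, 0 ≤ μ T) (hpos : 0 < piLev μ r S.card S) (a b : E) :
    0 ≤ locB2 μ r S a b :=
  div_nonneg (piLev_nonneg hμ _ _ _) (by positivity)

lemma locB2_symm (a b : E) : locB2 μ r S a b = locB2 μ r S b a := by
  unfold locB2
  rw [Finset.insert_comm]

lemma locB3_nonneg (hμ : ∀ T, 0 ≤ μ T) (hpos : 0 < piLev μ r S.card S) (a b c : E) :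
    0 ≤ locB3 μ r S a b c :=
  div_nonneg (piLev_nonneg hμ _ _ _) (by positivity)

lemma piLoc_of_mem (ha : a ∈ S) : piLoc μ r S a = 0 := by
  unfold piLoc
  rw [Finset.insert_eq_self.2 ha, piLev_of_card_ne (by omega), zero_div]

lemma piLoc_mul_localQ (hμ : IsDistOn μ r) (hr : S.card + 2 < r)
    (hpos : 0 < piLev μ r S.card S) (a b : E) :
    piLoc μ r S a * localQ μ r S a b = locB2 μ r S a b := by
  by_cases ha : a ∈ S
  · rw [piLoc_of_mem ha, zero_mul, locB2, Finset.insert_eq_self.2 ha,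
      piLev_of_card_ne (by have := Finset.card_insert_le b S; omega), zero_div]
  · have hcard : (insert a S).card = S.card + 1 := Finset.card_insert_of_notMem ha
    by_cases h0 : piLev μ r (S.card + 1) (insert a S) = 0
    · rw [piLoc, h0, zero_div, zero_mul, locB2,
        piLev_superset_zero hμ.1 (by omega) hcard h0 (Finset.subset_insert _ _), zero_div]
    · unfold piLoc localQ locB2
      simp only [Matrix.of_apply]
      have h1 : ((S.card : ℝ) + 1) ≠ 0 := by positivity
      have h2 : ((S.card : ℝ) + 2) ≠ 0 := by positivity
      field_simp

lemma piLoc_insert_eq (ha : a ∉ S) (b : E) :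
    piLoc μ r (insert a S) b = localQ μ r S a b := by
  unfold piLoc localQ
  simp only [Matrix.of_apply, Finset.card_insert_of_notMem ha]
  rw [show S.card + 1 + 1 = S.card + 2 from by omega]
  push_cast
  ring_nf

lemma piLoc_mul_piLoc (hμ : IsDistOn μ r) (hr : S.card + 2 < r)
    (hpos : 0 < piLev μ r S.card S) (a b : E) :
    piLoc μ r S a * piLoc μ r (insert a S) b = locB2 μ r S a b := by
  by_cases ha : a ∈ S
  · rw [piLoc_of_mem ha, zero_mul, locB2, Finset.insert_eq_self.2 ha,
      piLev_of_card_ne (by have := Finset.card_insert_le b S; omega), zero_div]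
  · rw [piLoc_insert_eq ha b]
    exact piLoc_mul_localQ hμ hr hpos a b

lemma sum_piLoc (hμ : IsDistOn μ r) (hr : S.card + 2 < r)
    (hpos : 0 < piLev μ r S.card S) : ∑ a, piLoc μ r S a = 1 := by
  unfold piLoc
  rw [← Finset.sum_div, sum_piLev_insert hμ (by omega) rfl, div_self]
  have h1 : ((S.card : ℝ) + 1) ≠ 0 := by positivity
  positivity

lemma sum_locB2_right (hμ : IsDistOn μ r) (hr : S.card + 2 < r)
    (hpos : 0 < piLev μ r S.card S) (a : E) :
    ∑ b, locB2 μ r S a b = piLoc μ r S a := by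
  unfold locB2
  rw [← Finset.sum_div]
  by_cases ha : a ∈ S
  · rw [piLoc_of_mem ha]
    rw [Finset.sum_eq_zero, zero_div]
    intro b _
    rw [Finset.insert_eq_self.2 ha, piLev_of_card_ne (by have := Finset.card_insert_le b S; omega)]
  · have hcard : (insert a S).card = S.card + 1 := Finset.card_insert_of_notMem ha
    rw [show S.card + 2 = S.card + 1 + 1 from by omega,
      sum_piLev_insert hμ (by omega) hcard]
    unfold piLoc
    have h1 : ((S.card : ℝ) + 1) ≠ 0 := by positivity
    have h2 : ((S.card : ℝ) + 2) ≠ 0 := by positivity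
    field_simp
    push_cast
    ring

lemma sum_locB2_left (hμ : IsDistOn μ r) (hr : S.card + 2 < r)
    (hpos : 0 < piLev μ r S.card S) (b : E) :
    ∑ a, locB2 μ r S a b = piLoc μ r S b := by
  rw [Finset.sum_congr rfl (fun a _ => locB2_symm a b)]
  exact sum_locB2_right hμ hr hpos b

lemma locB2_zero_left (hμ : IsDistOn μ r) (hr : S.card + 2 < r)
    (hpos : 0 < piLev μ r S.card S) (h : piLoc μ r S a = 0) (b : E) :
    locB2 μ r S a b = 0 := by
  by_cases ha : a ∈ S
  · rw [locB2, Finset.insert_eq_self.2 ha,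
      piLev_of_card_ne (by have := Finset.card_insert_le b S; omega), zero_div]
  · have hcard : (insert a S).card = S.card + 1 := Finset.card_insert_of_notMem ha
    have h0 : piLev μ r (S.card + 1) (insert a S) = 0 := by
      rcases div_eq_zero_iff.1 h with h' | h'
      · exact h'
      · exfalso
        have h1 : (0:ℝ) < ((S.card : ℝ) + 1) * piLev μ r S.card S := by positivity
        rw [h'] at h1
        exact lt_irrefl 0 h1
    rw [locB2, piLev_superset_zero hμ.1 (by omega) hcard h0 (Finset.subset_insert _ _), zero_div]

lemma piLoc_pos_iff (hpos : 0 < piLev μ r S.card S) (hμ : ∀ T, 0 ≤ μ T) (a : E) :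
    0 < piLoc μ r S a ↔ piLev μ r (S.card + 1) (insert a S) ≠ 0 := by
  have hD : (0:ℝ) < ((S.card : ℕ) + 1 : ℕ) * piLev μ r S.card S := by positivity
  constructor
  · intro h hz
    rw [piLoc] at h
    rw [hz, zero_div] at h
    · exact lt_irrefl 0 (by exact_mod_cast h)
  · intro h
    rw [piLoc]
    apply div_pos (lt_of_le_of_ne (piLev_nonneg hμ _ _ _) (Ne.symm h))
    push_cast
    positivity

lemma piLoc_mul3 (hμ : IsDistOn μ r) (hr : S.card + 2 < r)
    (hpos : 0 < piLev μ r S.card S) (a b c : E) :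
    piLoc μ r S a * piLoc μ r (insert a S) b * localQ μ r (insert a S) b c
      = locB3 μ r S a b c := by
  by_cases ha : a ∈ S
  · rw [piLoc_of_mem ha, zero_mul, zero_mul, locB3, Finset.insert_eq_self.2 ha]
    rw [piLev_of_card_ne, zero_div]
    have h1 := Finset.card_insert_le b S
    have h2 := Finset.card_insert_le c (insert b S)
    omega
  · have hcard : (insert a S).card = S.card + 1 := Finset.card_insert_of_notMem ha
    set W := insert a S with hW
    by_cases h1 : piLev μ r (S.card + 1) W = 0
    · rw [piLoc, h1, zero_div, zero_mul, zero_mul, locB3]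
      rw [piLev_superset_zero hμ.1 (by omega) hcard h1
        ((Finset.subset_insert b W).trans (Finset.subset_insert c _)), zero_div]
    · by_cases hb : b ∈ W
      · have hbW : insert b W = W := Finset.insert_eq_self.2 hb
        rw [piLoc_of_mem hb, mul_zero, zero_mul, locB3, hbW]
        rw [piLev_of_card_ne, zero_div]
        have h2 := Finset.card_insert_le c W
        omega
      · have hcard2 : (insert b W).card = S.card + 2 := by
          rw [Finset.card_insert_of_notMem hb, hcard]
        by_cases h2 : piLev μ r (S.card + 2) (insert b W) = 0
        · have hz : piLoc μ r W b = 0 := by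
            rw [piLoc, hcard, show S.card + 1 + 1 = S.card + 2 from by omega, h2, zero_div]
          rw [hz, mul_zero, zero_mul, locB3,
            piLev_superset_zero hμ.1 (by omega) hcard2 h2 (Finset.subset_insert c _), zero_div]
        · unfold piLoc localQ locB3
          simp only [Matrix.of_apply, hcard]
          rw [show S.card + 1 + 1 = S.card + 2 from by omega,
            show S.card + 1 + 2 = S.card + 3 from by omega]
          have d1 : ((S.card : ℝ) + 1) ≠ 0 := by positivity
          have hposW : (0:ℝ) < piLev μ r (S.card + 1) W :=
            lt_of_le_of_ne (piLev_nonneg hμ.1 _ _ _) (Ne.symm h1)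
          have hposWb : (0:ℝ) < piLev μ r (S.card + 2) (insert b W) :=
            lt_of_le_of_ne (piLev_nonneg hμ.1 _ _ _) (Ne.symm h2)
          field_simp
          push_cast
          ring

lemma sum_locB3_a (hμ : IsDistOn μ r) (hr : S.card + 2 < r)
    (hpos : 0 < piLev μ r S.card S) (b c : E) :
    ∑ a, locB3 μ r S a b c = locB2 μ r S b c := by
  unfold locB3 locB2
  have hre : ∀ a : E, insert c (insert b (insert a S)) = insert a (insert c (insert b S)) := by
    intro a
    rw [Finset.insert_comm b a S, Finset.insert_comm c a (insert b S)]
  simp_rw [hre]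
  rw [← Finset.sum_div]
  set V := insert c (insert b S) with hV
  by_cases hVc : V.card = S.card + 2
  · rw [show S.card + 3 = S.card + 2 + 1 from by omega, sum_piLev_insert hμ (by omega) hVc]
    have d1 : ((S.card : ℝ) + 1) ≠ 0 := by positivity
    have d2 : ((S.card : ℝ) + 2) ≠ 0 := by positivity
    have d3 : ((S.card : ℝ) + 3) ≠ 0 := by positivity
    field_simp
    push_cast
    ring
  · have hVle : V.card ≤ S.card + 2 := by
      rw [hV]
      have h1 := Finset.card_insert_le b S
      have h2 := Finset.card_insert_le c (insert b S)
      omega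
    rw [Finset.sum_eq_zero, zero_div, piLev_of_card_ne hVc, zero_div]
    intro a _
    apply piLev_of_card_ne
    have h3 := Finset.card_insert_le a V
    omega

lemma sum_locB3_c (hμ : IsDistOn μ r) (hr : S.card + 2 < r)
    (hpos : 0 < piLev μ r S.card S) (a b : E) :
    ∑ c, locB3 μ r S a b c = locB2 μ r S a b := by
  unfold locB3 locB2
  rw [← Finset.sum_div]
  set V := insert b (insert a S) with hV
  by_cases hVc : V.card = S.card + 2
  · rw [show S.card + 3 = S.card + 2 + 1 from by omega, sum_piLev_insert hμ (by omega) hVc]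
    have d1 : ((S.card : ℝ) + 1) ≠ 0 := by positivity
    have d2 : ((S.card : ℝ) + 2) ≠ 0 := by positivity
    have d3 : ((S.card : ℝ) + 3) ≠ 0 := by positivity
    field_simp
    push_cast
    ring
  · have hVle : V.card ≤ S.card + 2 := by
      rw [hV]
      have h1 := Finset.card_insert_le a S
      have h2 := Finset.card_insert_le b (insert a S)
      omega
    rw [Finset.sum_eq_zero, zero_div, piLev_of_card_ne hVc, zero_div]
    intro c _
    apply piLev_of_card_ne
    have h3 := Finset.card_insert_le c V
    omega

lemma sum_piLoc_insert (hμ : IsDistOn μ r) (hr : S.card + 2 < r)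
    (hpos : 0 < piLev μ r S.card S) (ha : 0 < piLoc μ r S a) :
    ∑ b, piLoc μ r (insert a S) b = 1 := by
  have haS : a ∉ S := by
    intro h
    rw [piLoc_of_mem h] at ha
    exact lt_irrefl 0 ha
  have hcard : (insert a S).card = S.card + 1 := Finset.card_insert_of_notMem haS
  have h1 : piLev μ r (S.card + 1) (insert a S) ≠ 0 :=
    (piLoc_pos_iff hpos hμ.1 a).1 ha
  have hposW : (0:ℝ) < piLev μ r (S.card + 1) (insert a S) :=
    lt_of_le_of_ne (piLev_nonneg hμ.1 _ _ _) (Ne.symm h1)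
  unfold piLoc
  simp_rw [hcard]
  rw [← Finset.sum_div, sum_piLev_insert hμ (by omega) hcard, div_self]
  push_cast
  positivity

end Loc

lemma double_sum_expand {ι : Type*} [Fintype ι] (π : ι → ℝ) (B : ι → ι → ℝ)
    (hsym : ∀ a b, B a b = B b a) (hrow : ∀ a, ∑ b, B a b = π a) (f : ι → ℝ) (s : ℝ) :
    ∑ a, ∑ b, B a b * (f a + s * f b) ^ 2
      = (1 + s ^ 2) * (∑ a, π a * f a ^ 2) + 2 * s * ∑ a, ∑ b, B a b * f a * f b := by
  have expand : ∀ a b, B a b * (f a + s * f b) ^ 2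
      = B a b * f a ^ 2 + s ^ 2 * (B a b * f b ^ 2) + 2 * s * (B a b * f a * f b) := by
    intros; ring
  simp_rw [expand, Finset.sum_add_distrib, ← Finset.mul_sum]
  have e1 : ∑ a, ∑ b, B a b * f a ^ 2 = ∑ a, π a * f a ^ 2 := by
    apply Finset.sum_congr rfl
    intro a _
    rw [← Finset.sum_mul, hrow]
  have e2 : ∑ a, ∑ b, B a b * f b ^ 2 = ∑ a, π a * f a ^ 2 := by
    rw [Finset.sum_comm]
    apply Finset.sum_congr rfl
    intro b _
    rw [← Finset.sum_mul, Finset.sum_congr rfl (fun a _ => hsym a b), hrow]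
  rw [e1, e2]
  ring

lemma dirichletForm_eq {ι : Type*} [Fintype ι] (π : ι → ℝ) (Q : Matrix ι ι ℝ)
    (B : ι → ι → ℝ) (hPB : ∀ a b, π a * Q a b = B a b) (hsym : ∀ a b, B a b = B b a)
    (hrow : ∀ a, ∑ b, B a b = π a) (f : ι → ℝ) :
    dirichletForm π Q f = ∑ a, π a * f a ^ 2 - ∑ a, ∑ b, B a b * f a * f b := by
  unfold dirichletForm
  have h : ∀ a b, π a * Q a b * (f a - f b) ^ 2 = B a b * (f a + (-1) * f b) ^ 2 := by
    intro a b; rw [← hPB]; ring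
  simp_rw [h]
  rw [double_sum_expand π B hsym hrow f (-1)]
  ring

lemma form_plus {ι : Type*} [Fintype ι] (π : ι → ℝ) (B : ι → ι → ℝ)
    (hsym : ∀ a b, B a b = B b a) (hrow : ∀ a, ∑ b, B a b = π a)
    (hB0 : ∀ a b, 0 ≤ B a b) (f : ι → ℝ) :
    -(∑ a, π a * f a ^ 2) ≤ ∑ a, ∑ b, B a b * f a * f b := by
  have h := double_sum_expand π B hsym hrow f 1
  have pos : 0 ≤ ∑ a, ∑ b, B a b * (f a + 1 * f b) ^ 2 :=
    Finset.sum_nonneg fun a _ => Finset.sum_nonneg fun b _ =>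
      mul_nonneg (hB0 a b) (sq_nonneg _)
  nlinarith [h, pos]

lemma varw_eq {ι : Type*} [Fintype ι] (π : ι → ℝ) (h1 : ∑ a, π a = 1) (f : ι → ℝ) :
    varw π f = ∑ a, π a * f a ^ 2 - (∑ a, π a * f a) ^ 2 := by
  unfold varw
  set m := ∑ b, π b * f b with hm
  have h : ∀ a, π a * (f a - m) ^ 2
      = π a * f a ^ 2 - 2 * m * (π a * f a) + m ^ 2 * π a := by intro a; ring
  simp_rw [h, Finset.sum_add_distrib, Finset.sum_sub_distrib, ← Finset.mul_sum]
  rw [h1, ← hm]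
  ring

lemma M_shift {ι : Type*} [Fintype ι] (π : ι → ℝ) (B : ι → ι → ℝ)
    (hsym : ∀ a b, B a b = B b a) (hrow : ∀ a, ∑ b, B a b = π a)
    (hπ1 : ∑ a, π a = 1) (f : ι → ℝ) (m : ℝ) :
    ∑ a, ∑ b, B a b * (f a - m) * (f b - m)
      = (∑ a, ∑ b, B a b * f a * f b) - 2 * m * (∑ a, π a * f a) + m ^ 2 := by
  have h : ∀ a b, B a b * (f a - m) * (f b - m)
      = B a b * f a * f b - m * (B a b * f a) - m * (B a b * f b) + m ^ 2 * B a b := by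
    intros; ring
  have e1 : ∑ a, ∑ b, B a b * f a = ∑ a, π a * f a := by
    apply Finset.sum_congr rfl
    intro a _
    rw [← Finset.sum_mul, hrow]
  have e2 : ∑ a, ∑ b, B a b * f b = ∑ a, π a * f a := by
    rw [Finset.sum_comm]
    apply Finset.sum_congr rfl
    intro b _
    rw [← Finset.sum_mul, Finset.sum_congr rfl (fun a _ => hsym a b), hrow]
  have e3 : ∑ a, ∑ b, B a b = (1:ℝ) := by
    rw [Finset.sum_congr rfl (fun a (_ : a ∈ univ) => hrow a), hπ1]
  simp_rw [h, Finset.sum_add_distrib, Finset.sum_sub_distrib, ← Finset.mul_sum]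
  rw [e1, e2, e3]
  ring

lemma euclid_inner (x y : EuclideanSpace ℝ E) : (inner ℝ x y : ℝ) = ∑ a, x a * y a := by
  rw [PiLp.inner_apply]
  simp [RCLike.inner_apply, mul_comm]

lemma euclid_apply (A : Matrix E E ℝ) (x : EuclideanSpace ℝ E) (a : E) :
    (Matrix.toEuclideanLin A x) a = ∑ b, A a b * x b := by
  rw [Matrix.toEuclideanLin_apply]
  rfl


set_option maxHeartbeats 3200000 in
/-- Trickle-Down Theorem: let `S` be a face with `|S| = i < r − 2`
in a pure weighted simplicial complex of dimension `r`, suppose the local walk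
`Q_S` has spectral gap exactly `γ_i > 0` (stated via `IsGreatest` for the Poincaré
constant), and every one-element extension `S ∪ {a}` has local walk spectral gap at
least `γ_{i+1} > 0`.  Then `γ_i ≥ 2 − 1/γ_{i+1}`. -/
theorem trickle_down (μ : Finset E → ℝ) (r : ℕ) (hμ : IsDistOn μ r)
    (S : Finset E) (i : ℕ) (hS : S.card = i) (hir : i < r - 2)
    (hSpos : 0 < piLev μ r i S)
    (γi γi1 : ℝ) (hγi_pos : 0 < γi) (hγi1_pos : 0 < γi1)
    (hγi : IsGreatest {c : ℝ | ∀ f : E → ℝ,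
        c * varw (piLoc μ r S) f ≤ dirichletForm (piLoc μ r S) (localQ μ r S) f} γi)
    (hext : ∀ a : E, 0 < piLoc μ r S a → ∀ f : E → ℝ,
        γi1 * varw (piLoc μ r (insert a S)) f ≤
          dirichletForm (piLoc μ r (insert a S)) (localQ μ r (insert a S)) f) :
    γi ≥ 2 - 1 / γi1 := by
  classical
  subst hS
  have hr2 : S.card + 2 < r := by omega
  set π : E → ℝ := piLoc μ r S with hπdef
  set B : E → E → ℝ := locB2 μ r S with hBdef
  -- basic facts
  have hπ0 : ∀ a, 0 ≤ π a := fun a => piLoc_nonneg hμ.1 a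
  have hπ1 : ∑ a, π a = 1 := sum_piLoc hμ hr2 hSpos
  have hBsym : ∀ a b, B a b = B b a := fun a b => locB2_symm a b
  have hBrow : ∀ a, ∑ b, B a b = π a := fun a => sum_locB2_right hμ hr2 hSpos a
  have hBcol : ∀ b, ∑ a, B a b = π b := fun b => sum_locB2_left hμ hr2 hSpos b
  have hB0 : ∀ a b, 0 ≤ B a b := fun a b => locB2_nonneg hμ.1 hSpos a b
  have hPQ : ∀ a b, π a * localQ μ r S a b = B a b := fun a b =>
    piLoc_mul_localQ hμ hr2 hSpos a b
  have hBzl : ∀ a b, π a = 0 → B a b = 0 := fun a b h =>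
    locB2_zero_left hμ hr2 hSpos h b
  have hBzr : ∀ a b, π b = 0 → B a b = 0 := fun a b h => by
    rw [hBsym]; exact hBzl b a h
  -- abbreviations
  set M : (E → ℝ) → ℝ := fun f => ∑ a, ∑ b, B a b * f a * f b with hMdef
  have hDF : ∀ f : E → ℝ, dirichletForm π (localQ μ r S) f
      = (∑ a, π a * f a ^ 2) - M f := fun f =>
    dirichletForm_eq π (localQ μ r S) B hPQ hBsym hBrow f
  have hVW : ∀ f : E → ℝ, varw π f
      = (∑ a, π a * f a ^ 2) - (∑ a, π a * f a) ^ 2 := varw_eq π hπ1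
  have hMlow : ∀ f : E → ℝ, 2 * (∑ a, π a * f a) ^ 2 - (∑ a, π a * f a ^ 2) ≤ M f := by
    intro f
    set m := ∑ a, π a * f a with hm
    have h1 := form_plus π B hBsym hBrow hB0 (fun a => f a - m)
    have h2 := M_shift π B hBsym hBrow hπ1 f m
    have h3 : ∑ a, π a * (f a - m) ^ 2 = (∑ a, π a * f a ^ 2) - m ^ 2 := by
      have h : ∀ a, π a * (f a - m) ^ 2
          = π a * f a ^ 2 - 2 * m * (π a * f a) + m ^ 2 * π a := by intro a; ring
      simp_rw [h, Finset.sum_add_distrib, Finset.sum_sub_distrib, ← Finset.mul_sum]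
      rw [hπ1, ← hm]
      ring
    rw [h3] at h1
    rw [h2, ← hm] at h1
    linarith
  have hMup : ∀ f : E → ℝ,
      M f ≤ (1 - γi) * (∑ a, π a * f a ^ 2) + γi * (∑ a, π a * f a) ^ 2 := by
    intro f
    have h := hγi.1 f
    rw [hDF, hVW] at h
    linarith
  -- Dirichlet form is nonnegative
  have hDnn : ∀ f : E → ℝ, 0 ≤ dirichletForm π (localQ μ r S) f := by
    intro f
    unfold dirichletForm
    apply mul_nonneg (by norm_num)
    apply Finset.sum_nonneg; intro a _
    apply Finset.sum_nonneg; intro b _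
    exact mul_nonneg (mul_nonneg (hπ0 a) (localQ_nonneg hμ.1 a b)) (sq_nonneg _)
  have hvarnn : ∀ f : E → ℝ, 0 ≤ varw π f := by
    intro f
    apply Finset.sum_nonneg; intro a _
    exact mul_nonneg (hπ0 a) (sq_nonneg _)
  -- γi ≤ 2
  have hγ2 : γi ≤ 2 := by
    by_contra hcon
    push_neg at hcon
    have hvz : ∀ f : E → ℝ, varw π f = 0 := by
      intro f
      by_contra hf
      have hv : 0 < varw π f := lt_of_le_of_ne (hvarnn f) (Ne.symm hf)
      have hD2 : dirichletForm π (localQ μ r S) f ≤ 2 * varw π f := by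
        rw [hDF, hVW]
        have := hMlow f
        linarith
      have := hγi.1 f
      nlinarith
    have hmem : (γi + 1) ∈ {c : ℝ | ∀ f : E → ℝ,
        c * varw π f ≤ dirichletForm π (localQ μ r S) f} := by
      intro f
      rw [hvz f, mul_zero]
      exact hDnn f
    have := hγi.2 hmem
    linarith
  -- the symmetric operator
  set u : E → ℝ := fun a => Real.sqrt (π a) with hudef
  have hu2 : ∀ a, u a * u a = π a := fun a => Real.mul_self_sqrt (hπ0 a)
  have huz : ∀ a, π a = 0 → u a = 0 := by
    intro a h; rw [hudef]; simp [h]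
  have hunz : ∀ a, π a ≠ 0 → u a ≠ 0 := by
    intro a h hz
    apply h
    rw [← hu2 a, hz, mul_zero]
  set Amat : Matrix E E ℝ := Matrix.of (fun a b =>
    (if π a = 0 ∨ π b = 0 then (if a = b then (1 - γi) else 0) else B a b / (u a * u b))
      - γi * (u a * u b)) with hAdef
  have hAapp : ∀ a b, Amat a b =
      (if π a = 0 ∨ π b = 0 then (if a = b then (1 - γi) else 0) else B a b / (u a * u b))
        - γi * (u a * u b) := by
    intro a b; rw [hAdef]; rfl
  have hAsym : ∀ a b, Amat a b = Amat b a := by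
    intro a b
    rw [hAapp, hAapp]
    congr 1
    · exact if_congr or_comm (if_congr eq_comm rfl rfl) (by rw [hBsym a b, mul_comm])
    · ring
  -- the form computation
  have formA : ∀ g : E → ℝ, ∑ a, ∑ b, Amat a b * g a * g b
      = M (fun a => if π a = 0 then 0 else g a / u a)
        + (1 - γi) * (∑ a, if π a = 0 then g a ^ 2 else 0)
        - γi * (∑ a, u a * g a) ^ 2 := by
    intro g
    set fg : E → ℝ := fun a => if π a = 0 then 0 else g a / u a with hfg
    have entry : ∀ a b, Amat a b * g a * g b
        = B a b * fg a * fg b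
          + (if a = b then (if π a = 0 then (1 - γi) * g a ^ 2 else 0) else 0)
          - γi * ((u a * g a) * (u b * g b)) := by
      intro a b
      rw [hAapp]
      by_cases hab : π a = 0 ∨ π b = 0
      · rw [if_pos hab]
        have hfz : B a b * fg a * fg b = 0 := by
          rcases hab with h | h
          · simp [hfg, h]
          · simp [hfg, h]
        by_cases he : a = b
        · subst he
          have ha : π a = 0 := by tauto
          rw [if_pos rfl, if_pos rfl, if_pos ha, hfz]
          rw [huz a ha]
          ring
        · rw [if_neg he, if_neg he, hfz]
          ring
      · push_neg at hab
        obtain ⟨ha, hb⟩ := hab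
        rw [if_neg (by tauto)]
        have hbr : (if a = b then (if π a = 0 then (1 - γi) * g a ^ 2 else 0) else 0)
            = 0 := by
          simp [ha]
        rw [hbr]
        have hga : fg a = g a / u a := by rw [hfg]; simp [ha]
        have hgb : fg b = g b / u b := by rw [hfg]; simp [hb]
        rw [hga, hgb]
        have hua := hunz a ha
        have hub := hunz b hb
        field_simp
        ring
    simp_rw [entry]
    simp only [Finset.sum_sub_distrib, Finset.sum_add_distrib]
    have hdiag : ∀ a : E, (∑ b, if a = b then
        (if π a = 0 then (1 - γi) * g a ^ 2 else 0) else 0)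
        = (1 - γi) * (if π a = 0 then g a ^ 2 else 0) := by
      intro a
      rw [Finset.sum_ite_eq univ a (fun _ => if π a = 0 then (1 - γi) * g a ^ 2 else 0),
        if_pos (Finset.mem_univ a)]
      split <;> ring
    have hd2 : (∑ a, ∑ b, if a = b then (if π a = 0 then (1 - γi) * g a ^ 2 else 0) else 0)
        = (1 - γi) * (∑ a, if π a = 0 then g a ^ 2 else 0) := by
      rw [Finset.sum_congr rfl (fun a _ => hdiag a), ← Finset.mul_sum]
    have hrk : (∑ a, ∑ b, γi * ((u a * g a) * (u b * g b)))
        = γi * (∑ a, u a * g a) ^ 2 := by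
      have h1 : ∀ a : E, (∑ b, γi * ((u a * g a) * (u b * g b)))
          = γi * ((u a * g a) * ∑ b, u b * g b) := by
        intro a; rw [← Finset.mul_sum, ← Finset.mul_sum]
      rw [Finset.sum_congr rfl (fun a _ => h1 a), ← Finset.mul_sum, ← Finset.sum_mul, sq]
    rw [hd2, hrk]
  -- translate between g and its supported quotient
  have hsupp_props : ∀ g : E → ℝ,
      (∑ a, u a * g a = ∑ a, π a * (if π a = 0 then 0 else g a / u a))
      ∧ (∑ a, g a ^ 2 = (∑ a, π a * (if π a = 0 then 0 else g a / u a) ^ 2)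
          + ∑ a, (if π a = 0 then g a ^ 2 else 0)) := by
    intro g
    constructor
    · apply Finset.sum_congr rfl
      intro a _
      by_cases h : π a = 0
      · rw [if_pos h, huz a h, h]; ring
      · rw [if_neg h]
        have : g a / u a * u a = g a := div_mul_cancel₀ _ (hunz a h)
        rw [← hu2 a]
        calc u a * g a = u a * (g a / u a * u a) := by rw [this]
          _ = u a * u a * (g a / u a) := by ring
        
    · rw [← Finset.sum_add_distrib]
      apply Finset.sum_congr rfl
      intro a _
      by_cases h : π a = 0
      · rw [if_pos h, if_pos h, h]; ring
      · rw [if_neg h, if_neg h]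
        have h1 : g a / u a * u a = g a := div_mul_cancel₀ _ (hunz a h)
        calc g a ^ 2 = (u a * u a) * (g a / u a) ^ 2 + 0 := by
              rw [add_zero, div_pow, ← sq, mul_comm,
                div_mul_cancel₀ _ (pow_ne_zero 2 (hunz a h))]
          _ = π a * (g a / u a) ^ 2 + 0 := by rw [hu2 a]
  -- upper form bound
  have hup : ∀ g : E → ℝ, (∑ a, ∑ b, Amat a b * g a * g b) ≤ (1 - γi) * ∑ a, g a ^ 2 := by
    intro g
    set f : E → ℝ := fun a => if π a = 0 then 0 else g a / u a with hf
    obtain ⟨ht, hsq⟩ := hsupp_props g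
    have hMub := hMup f
    have hOff : 0 ≤ ∑ a, (if π a = 0 then g a ^ 2 else 0) := by
      apply Finset.sum_nonneg; intro a _
      split
      · exact sq_nonneg _
      · exact le_refl 0
    rw [formA g, ht, hsq]
    set X := ∑ a, π a * f a ^ 2
    set mm := ∑ a, π a * f a
    set Off := ∑ a, (if π a = 0 then g a ^ 2 else 0)
    nlinarith [hMub]
  -- lower form bound
  have hlow : ∀ g : E → ℝ, -(∑ a, g a ^ 2) ≤ ∑ a, ∑ b, Amat a b * g a * g b := by
    intro g
    set f : E → ℝ := fun a => if π a = 0 then 0 else g a / u a with hf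
    obtain ⟨ht, hsq⟩ := hsupp_props g
    have hMlb := hMlow f
    have hOff : 0 ≤ ∑ a, (if π a = 0 then g a ^ 2 else 0) := by
      apply Finset.sum_nonneg; intro a _
      split
      · exact sq_nonneg _
      · exact le_refl 0
    rw [formA g, ht, hsq]
    set X := ∑ a, π a * f a ^ 2
    set mm := ∑ a, π a * f a
    set Off := ∑ a, (if π a = 0 then g a ^ 2 else 0)
    nlinarith [hMlb, sq_nonneg mm]
  -- the linear operator
  set T := Matrix.toEuclideanLin Amat with hTdef
  have hinner : ∀ x y : EuclideanSpace ℝ E, (inner ℝ x y : ℝ) = ∑ a, x a * y a :=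
    fun x y => euclid_inner x y
  have hTapp : ∀ (x : EuclideanSpace ℝ E) (a : E), (T x) a = ∑ b, Amat a b * x b := by
    intro x a; rw [hTdef]; exact euclid_apply Amat x a
  have hformT : ∀ x : EuclideanSpace ℝ E,
      (inner ℝ x (T x) : ℝ) = ∑ a, ∑ b, Amat a b * x a * x b := by
    intro x
    rw [hinner]
    apply Finset.sum_congr rfl
    intro a _
    rw [hTapp, Finset.mul_sum]
    apply Finset.sum_congr rfl
    intro b _
    ring
  have hxx : ∀ x : EuclideanSpace ℝ E, (inner ℝ x x : ℝ) = ∑ a, x a ^ 2 := by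
    intro x; rw [hinner]; apply Finset.sum_congr rfl; intro a _; ring
  have hTsym : T.IsSymmetric := by
    intro x y
    have lhs : (inner ℝ (T x) y : ℝ) = ∑ a, ∑ b, Amat a b * x b * y a := by
      rw [hinner]
      apply Finset.sum_congr rfl; intro a _
      rw [hTapp, Finset.sum_mul]
    have rhs : (inner ℝ x (T y) : ℝ) = ∑ a, ∑ b, Amat a b * y b * x a := by
      rw [hinner]
      apply Finset.sum_congr rfl; intro a _
      rw [hTapp, Finset.mul_sum]
      apply Finset.sum_congr rfl; intro b _; ring
    rw [lhs, rhs, Finset.sum_comm]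
    apply Finset.sum_congr rfl; intro a _
    apply Finset.sum_congr rfl; intro b _
    rw [hAsym]
    ring
  have hcore : ∀ x : EuclideanSpace ℝ E,
      (inner ℝ (T x) (T x) : ℝ) ≤ (1 - γi) * inner ℝ x x + ((1 - γi) - 1) * inner ℝ x (T x) :=
    core_op T hTsym (1 - γi)
      (fun x => by rw [hxx, hformT]; exact hlow x)
      (fun x => by rw [hxx, hformT]; exact hup x)
  -- the key Poincaré membership
  have hmem : (2 * γi * γi1 / (1 + γi * γi1)) ∈ {c : ℝ | ∀ f : E → ℝ,
      c * varw π f ≤ dirichletForm π (localQ μ r S) f} := by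
    intro f
    set m := ∑ b, π b * f b with hm
    set F : E → ℝ := fun a => f a - m with hFdef
    have hVeq : varw π f = ∑ a, π a * F a ^ 2 := by
      unfold varw
      rfl
    have hFsum : ∑ a, π a * F a = 0 := by
      have h1 : ∀ a, π a * F a = π a * f a - m * π a := by
        intro a; rw [hFdef]; ring
      simp_rw [h1]
      rw [Finset.sum_sub_distrib, ← Finset.mul_sum, hπ1, ← hm]
      ring
    set x : EuclideanSpace ℝ E := (WithLp.equiv 2 (E → ℝ)).symm (fun a => u a * F a)
      with hxdef
    have hx : ∀ a, x a = u a * F a := by intro a; rw [hxdef]; rfl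
    have htx : ∑ a, u a * (u a * F a) = 0 := by
      have h1 : ∀ a, u a * (u a * F a) = π a * F a := by
        intro a; rw [← hu2 a]; ring
      rw [Finset.sum_congr rfl (fun a _ => h1 a)]
      exact hFsum
    have hOffx : (∑ a, if π a = 0 then (u a * F a) ^ 2 else 0) = 0 := by
      apply Finset.sum_eq_zero
      intro a _
      by_cases h : π a = 0
      · rw [if_pos h, huz a h]; ring
      · rw [if_neg h]
    have hMfg : M (fun a => if π a = 0 then 0 else (u a * F a) / u a) = M F := by
      rw [hMdef]
      simp only []
      apply Finset.sum_congr rfl; intro a _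
      apply Finset.sum_congr rfl; intro b _
      by_cases hpa : π a = 0
      · rw [hBzl a b hpa]; ring
      · by_cases hpb : π b = 0
        · rw [hBzr a b hpb]; ring
        · rw [if_neg hpa, if_neg hpb, mul_comm (u a) (F a), mul_comm (u b) (F b),
            mul_div_cancel_right₀ _ (hunz a hpa), mul_div_cancel_right₀ _ (hunz b hpb)]
    have hxTx : (inner ℝ x (T x) : ℝ) = M F := by
      rw [hformT]
      have h1 : ∀ a b, Amat a b * x a * x b = Amat a b * (u a * F a) * (u b * F b) := by
        intro a b; rw [hx, hx]
      simp_rw [h1]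
      rw [formA (fun a => u a * F a), hMfg, hOffx, htx]
      ring
    have hxxV : (inner ℝ x x : ℝ) = ∑ a, π a * F a ^ 2 := by
      rw [hxx]
      apply Finset.sum_congr rfl; intro a _
      rw [hx, mul_pow, show u a ^ 2 = π a from by rw [sq, hu2]]
    set NN := ∑ a, (if π a = 0 then 0 else (∑ b, B a b * F b) ^ 2 / π a) with hNN
    have hTxa : ∀ a, (T x) a = (if π a = 0 then 0 else (∑ b, B a b * F b) / u a) := by
      intro a
      rw [hTapp]
      have hsplit : ∀ b, Amat a b * x b
          = (if π a = 0 ∨ π b = 0 then (if a = b then (1 - γi) else 0)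
              else B a b / (u a * u b)) * x b
            - γi * (u a * (u b * x b)) := by
        intro b; rw [hAapp]; ring
      simp_rw [hsplit]
      rw [Finset.sum_sub_distrib, ← Finset.mul_sum, ← Finset.mul_sum]
      have hzero : ∑ b, u b * x b = 0 := by
        have h1 : ∀ b, u b * x b = u b * (u b * F b) := by intro b; rw [hx]
        rw [Finset.sum_congr rfl (fun b _ => h1 b)]
        exact htx
      rw [hzero, mul_zero, mul_zero, sub_zero]
      by_cases hpa : π a = 0
      · rw [if_pos hpa]
        apply Finset.sum_eq_zero
        intro b _
        rw [if_pos (Or.inl hpa)]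
        by_cases he : a = b
        · rw [if_pos he, hx, ← he, huz a hpa]; ring
        · rw [if_neg he, zero_mul]
      · rw [if_neg hpa, Finset.sum_div]
        apply Finset.sum_congr rfl
        intro b _
        by_cases hpb : π b = 0
        · rw [if_pos (Or.inr hpb), hx, huz b hpb, hBzr a b hpb]
          simp
        · rw [if_neg (by tauto), hx]
          have ha' : u a ≠ 0 := hunz a hpa
          have hb' : u b ≠ 0 := hunz b hpb
          field_simp
    have hTxTx : (inner ℝ (T x) (T x) : ℝ) = NN := by
      rw [hxx (T x), hNN]
      apply Finset.sum_congr rfl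
      intro a _
      rw [hTxa a]
      by_cases hpa : π a = 0
      · rw [if_pos hpa, if_pos hpa]; ring
      · rw [if_neg hpa, if_neg hpa, div_pow,
          show u a ^ 2 = π a from by rw [sq, hu2]]
    have hNNle : NN ≤ (1 - γi) * (∑ a, π a * F a ^ 2) - γi * M F := by
      have h := hcore x
      rw [hTxTx, hxTx, hxxV] at h
      linarith
    have hvar_term : ∀ a, π a * varw (piLoc μ r (insert a S)) F
        = (∑ b, B a b * F b ^ 2)
          - (if π a = 0 then 0 else (∑ b, B a b * F b) ^ 2 / π a) := by
      intro a
      by_cases hpa : π a = 0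
      · rw [hpa, zero_mul, if_pos rfl,
          Finset.sum_eq_zero (fun b _ => by rw [hBzl a b hpa, zero_mul])]
        ring
      · have hpa' : 0 < π a := lt_of_le_of_ne (hπ0 a) (Ne.symm hpa)
        have hsum1 : ∑ b, piLoc μ r (insert a S) b = 1 :=
          sum_piLoc_insert hμ hr2 hSpos hpa'
        rw [varw_eq (piLoc μ r (insert a S)) hsum1 F, if_neg hpa]
        have eX : ∑ b, B a b * F b ^ 2
            = π a * ∑ b, piLoc μ r (insert a S) b * F b ^ 2 := by
          rw [Finset.mul_sum]
          apply Finset.sum_congr rfl; intro b _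
          rw [hBdef, hπdef, ← piLoc_mul_piLoc hμ hr2 hSpos a b]
          ring
        have eY : ∑ b, B a b * F b
            = π a * ∑ b, piLoc μ r (insert a S) b * F b := by
          rw [Finset.mul_sum]
          apply Finset.sum_congr rfl; intro b _
          rw [hBdef, hπdef, ← piLoc_mul_piLoc hμ hr2 hSpos a b]
          ring
        rw [eX, eY]
        field_simp
    have hdir_term : ∀ a,
        π a * dirichletForm (piLoc μ r (insert a S)) (localQ μ r (insert a S)) F
        = (1/2) * ∑ b, ∑ c, locB3 μ r S a b c * (F b - F c) ^ 2 := by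
      intro a
      unfold dirichletForm
      rw [mul_left_comm]
      congr 1
      rw [Finset.mul_sum]
      apply Finset.sum_congr rfl; intro b _
      rw [Finset.mul_sum]
      apply Finset.sum_congr rfl; intro c _
      rw [hπdef, ← piLoc_mul3 hμ hr2 hSpos a b c]
      ring
    have hsum_ineq : γi1 * (∑ a, π a * varw (piLoc μ r (insert a S)) F)
        ≤ ∑ a, π a * dirichletForm (piLoc μ r (insert a S)) (localQ μ r (insert a S)) F := by
      rw [Finset.mul_sum]
      apply Finset.sum_le_sum
      intro a _
      by_cases hpa : 0 < π a
      · have h := hext a hpa F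
        calc γi1 * (π a * varw (piLoc μ r (insert a S)) F)
            = π a * (γi1 * varw (piLoc μ r (insert a S)) F) := by ring
          _ ≤ π a * dirichletForm (piLoc μ r (insert a S)) (localQ μ r (insert a S)) F :=
            mul_le_mul_of_nonneg_left h (hπ0 a)
      · have hz : π a = 0 := le_antisymm (not_lt.1 hpa) (hπ0 a)
        rw [hz, zero_mul, zero_mul, mul_zero]
    have hL : ∑ a, π a * varw (piLoc μ r (insert a S)) F
        = (∑ a, π a * F a ^ 2) - NN := by
      rw [Finset.sum_congr rfl (fun a _ => hvar_term a), Finset.sum_sub_distrib, hNN]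
      congr 1
      rw [Finset.sum_comm]
      apply Finset.sum_congr rfl; intro b _
      rw [← Finset.sum_mul, hBcol b]
    have hR : ∑ a, π a * dirichletForm (piLoc μ r (insert a S)) (localQ μ r (insert a S)) F
        = (∑ a, π a * F a ^ 2) - M F := by
      rw [Finset.sum_congr rfl (fun a _ => hdir_term a), ← Finset.mul_sum]
      have hswap : ∑ a, ∑ b, ∑ c, locB3 μ r S a b c * (F b - F c) ^ 2
          = ∑ b, ∑ c, B b c * (F b + (-1) * F c) ^ 2 := by
        rw [Finset.sum_comm]
        apply Finset.sum_congr rfl; intro b _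
        rw [Finset.sum_comm]
        apply Finset.sum_congr rfl; intro c _
        rw [← Finset.sum_mul, sum_locB3_a hμ hr2 hSpos b c, hBdef]
        ring
      rw [hswap, double_sum_expand π B hBsym hBrow F (-1), hMdef]
      simp only []
      ring
    have hchain : γi1 * ((∑ a, π a * F a ^ 2) - NN) ≤ (∑ a, π a * F a ^ 2) - M F := by
      rw [← hL, ← hR]
      exact hsum_ineq
    have hDval : dirichletForm π (localQ μ r S) f = (∑ a, π a * F a ^ 2) - M F := by
      have h1 : dirichletForm π (localQ μ r S) f = dirichletForm π (localQ μ r S) F := by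
        unfold dirichletForm
        congr 1
        apply Finset.sum_congr rfl; intro a _
        apply Finset.sum_congr rfl; intro b _
        have hFF : F a - F b = f a - f b := by rw [hFdef]; ring
        rw [hFF]
      rw [h1, hDF F]
    rw [hVeq, hDval]
    set V := ∑ a, π a * F a ^ 2 with hVdef
    have h2 : γi1 * (γi * V + γi * M F) ≤ γi1 * (V - NN) :=
      mul_le_mul_of_nonneg_left (by linarith) hγi1_pos.le
    have h3 : γi1 * (γi * V + γi * M F) ≤ V - M F := le_trans h2 hchain
    have hpos1 : (0:ℝ) < 1 + γi * γi1 := by positivity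
    rw [div_mul_eq_mul_div, div_le_iff₀ hpos1]
    nlinarith [h3, hγi1_pos.le, hγi_pos.le]
  -- conclude
  have hc0 := hγi.2 hmem
  have hpos1 : (0:ℝ) < 1 + γi * γi1 := by positivity
  rw [div_le_iff₀ hpos1] at hc0
  have h4 : 2 * γi1 ≤ 1 + γi * γi1 := by
    have h5 : γi * (2 * γi1) ≤ γi * (1 + γi * γi1) := by nlinarith [hc0]
    exact (mul_le_mul_iff_right₀ hγi_pos).1 h5
  have hinv : γi1 * (1 / γi1) = 1 := by field_simp
  rw [ge_iff_le]
  nlinarith [h4, hγi1_pos, hinv]
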